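/- arXiv:math/0611488 — 2 statements merged into one kernel-verified Lean document; each statement's English description precedes it below -/
import Mathlib

section
/- If f_1,...,f_r is a homogeneous regular sequence in k[x_1,...,x_n] with k an infinite field, r < m ≤ n, and positive integers a_{r+1},...,a_m are given, then there exist homogeneous f_{r+1},...,f_m with deg(f_i) = a_i such that f_1,...,f_m is a regular sequence. -/
open MvPolynomial

/-- Hilbert function of a homogeneous ideal `I`: the `K`-dimension of its degree-`d` piece. -/
noncomputable def hilb {K : Type} [Field K] {n : ℕ}
    (I : Ideal (MvPolynomial (Fin n) K)) (d : ℕ) : ℕ :=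
  Module.finrank K ↥(Submodule.restrictScalars K I ⊓ homogeneousSubmodule (Fin n) K d)

/-- Hilbert function of the quotient `S/I` in degree `d`. -/
noncomputable def hilbQ {K : Type} [Field K] {n : ℕ}
    (I : Ideal (MvPolynomial (Fin n) K)) (d : ℕ) : ℕ :=
  Module.finrank K
    ((homogeneousSubmodule (Fin n) K d).map (Ideal.Quotient.mkₐ K I).toLinearMap)

/-- A homogeneous ideal: closed under taking homogeneous components. -/
def IsHomog {K : Type} [Field K] {n : ℕ} (I : Ideal (MvPolynomial (Fin n) K)) : Prop :=
  ∀ f ∈ I, ∀ d : ℕ, homogeneousComponent d f ∈ I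

/-- `f 0, ..., f (r-1)` is a regular sequence: it generates a proper ideal and each `f i`
is a nonzerodivisor modulo the ideal generated by the previous elements. -/
def IsRegSeq {K : Type} [Field K] {n r : ℕ} (f : Fin r → MvPolynomial (Fin n) K) : Prop :=
  Ideal.span (Set.range f) ≠ ⊤ ∧
  ∀ i : Fin r, ∀ g : MvPolynomial (Fin n) K,
    f i * g ∈ Ideal.span (f '' {j : Fin r | j < i}) →
      g ∈ Ideal.span (f '' {j : Fin r | j < i})

/-- A monomial ideal: generated by monomials. -/
def IsMonomialIdeal {K : Type} [Field K] {n : ℕ} (I : Ideal (MvPolynomial (Fin n) K)) : Prop :=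
  ∃ T : Set (Fin n →₀ ℕ), I = Ideal.span ((fun u => monomial u (1 : K)) '' T)

/-- `x^v` is lexicographically greater than `x^u` (for `x_0 > x_1 > ... > x_{n-1}`). -/
def lexGT {n : ℕ} (v u : Fin n →₀ ℕ) : Prop :=
  ∃ i : Fin n, u i < v i ∧ ∀ j : Fin n, j < i → v j = u j
section General
variable {R : Type*} [CommRing R]

/-- `x` is a nonzerodivisor modulo the ideal `B`. -/
def nzdI (B : Ideal R) (x : R) : Prop := ∀ g, x * g ∈ B → g ∈ B

/-- The ideal generated by `B` and the elements of a list. -/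
def extI : Ideal R → List R → Ideal R
  | B, [] => B
  | B, x :: l => extI (B ⊔ Ideal.span {x}) l

/-- A list is a regular sequence over the base ideal `B`. -/
def regI : Ideal R → List R → Prop
  | _, [] => True
  | B, x :: l => nzdI B x ∧ regI (B ⊔ Ideal.span {x}) l

/-- There is an element outside `A` killed into `A` by all of `J` (a "socle witness"). -/
def socI (J A : Ideal R) : Prop := ∃ u, u ∉ A ∧ ∀ z ∈ J, z * u ∈ A

@[simp] lemma extI_nil (B : Ideal R) : extI B [] = B := rfl
@[simp] lemma extI_cons (B : Ideal R) (x : R) (l : List R) :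
    extI B (x :: l) = extI (B ⊔ Ideal.span {x}) l := rfl

lemma extI_sup (B C : Ideal R) (l : List R) : extI (B ⊔ C) l = extI B l ⊔ C := by
  induction l generalizing B with
  | nil => rfl
  | cons x l ih =>
    simp only [extI_cons]
    rw [sup_right_comm, ih]

lemma extI_append (B : Ideal R) (l₁ l₂ : List R) :
    extI B (l₁ ++ l₂) = extI (extI B l₁) l₂ := by
  induction l₁ generalizing B with
  | nil => rfl
  | cons x l ih => simp [ih]

lemma extI_concat (B : Ideal R) (l : List R) (x : R) :
    extI B (l ++ [x]) = extI B l ⊔ Ideal.span {x} := by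
  rw [extI_append]; rfl

lemma regI_append (B : Ideal R) (l₁ l₂ : List R) :
    regI B (l₁ ++ l₂) ↔ regI B l₁ ∧ regI (extI B l₁) l₂ := by
  induction l₁ generalizing B with
  | nil => simp [regI]
  | cons x l ih => simp [regI, ih, and_assoc]

lemma regI_concat (B : Ideal R) (l : List R) (x : R) :
    regI B (l ++ [x]) ↔ regI B l ∧ nzdI (extI B l) x := by
  rw [regI_append]; simp [regI]

lemma regI_nzd_prefix (B : Ideal R) (l : List R) (h : regI B l) (k : ℕ) (hk : k < l.length) :
    nzdI (extI B (l.take k)) (l.get ⟨k, hk⟩) := by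
  induction l generalizing B k with
  | nil => simp at hk
  | cons x l ih =>
    cases k with
    | zero => exact h.1
    | succ k => exact ih _ h.2 k (Nat.lt_of_succ_lt_succ hk)

/-- Swap lemma: if `x` is regular mod `B` and `z` is regular mod `B ⊔ (x)`,
then `x` is regular mod `B ⊔ (z)`. -/
lemma nzdI_swap {B : Ideal R} {a b : R} (ha : nzdI B a) (hab : nzdI (B ⊔ Ideal.span {a}) b) :
    nzdI (B ⊔ Ideal.span {b}) a := by
  intro u hu
  rw [Submodule.mem_sup] at hu
  obtain ⟨p, hp, q, hq, hau⟩ := hu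
  rw [Ideal.mem_span_singleton'] at hq
  obtain ⟨v, rfl⟩ := hq
  -- p + v * b = a * u
  have hbv : b * v ∈ B ⊔ Ideal.span {a} := by
    have : b * v = a * u - p := by linear_combination hau
    rw [this]
    exact sub_mem (Submodule.mem_sup_right (Ideal.mem_span_singleton'.2 ⟨u, mul_comm u a⟩))
      (Submodule.mem_sup_left hp)
  obtain ⟨p', hp', q, hq, hv⟩ := Submodule.mem_sup.1 (hab v hbv)
  rw [Ideal.mem_span_singleton'] at hq
  obtain ⟨m, rfl⟩ := hq
  -- p' + m * a = v
  have key : a * (u - m * b) ∈ B := by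
    have : a * (u - m * b) = p + b * p' := by linear_combination -hau - b * hv
    rw [this]
    exact add_mem hp (Ideal.mul_mem_left _ _ hp')
  have := ha _ key
  have : u = (u - m * b) + m * b := by ring
  rw [this]
  exact add_mem (Submodule.mem_sup_left (ha _ key))
    (Submodule.mem_sup_right (Ideal.mem_span_singleton'.2 ⟨m, rfl⟩))

/-- One-step exchange: a socle witness for `B ⊔ (x)` yields one for `B ⊔ (y)`,
for `x`, `y` regular mod `B` with `y ∈ J`. -/
lemma socI_exchange_one {J B : Ideal R} {x y : R} (hx : nzdI B x) (hy : nzdI B y)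
    (hyJ : y ∈ J) (h : socI J (B ⊔ Ideal.span {x})) : socI J (B ⊔ Ideal.span {y}) := by
  obtain ⟨u, hu, hJu⟩ := h
  obtain ⟨p, hp, q, hq, hyu⟩ := Submodule.mem_sup.1 (hJu y hyJ)
  rw [Ideal.mem_span_singleton'] at hq
  obtain ⟨v, rfl⟩ := hq
  -- p + v * x = y * u
  refine ⟨v, ?_, ?_⟩
  · intro hv
    obtain ⟨b₃, hb₃, q, hq, hveq⟩ := Submodule.mem_sup.1 hv
    rw [Ideal.mem_span_singleton'] at hq
    obtain ⟨m, rfl⟩ := hq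
    -- b₃ + m * y = v
    have key : y * (u - x * m) ∈ B := by
      have : y * (u - x * m) = p + x * b₃ := by linear_combination -hyu - x * hveq
      rw [this]
      exact add_mem hp (Ideal.mul_mem_left _ _ hb₃)
    have hum := hy _ key
    apply hu
    have : u = (u - x * m) + x * m := by ring
    rw [this]
    exact add_mem (Submodule.mem_sup_left hum)
      (Submodule.mem_sup_right (Ideal.mul_mem_right _ _ (Ideal.mem_span_singleton_self x)))
  · intro z hz
    obtain ⟨pz, hpz, q, hq, hzu⟩ := Submodule.mem_sup.1 (hJu z hz)
    rw [Ideal.mem_span_singleton'] at hq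
    obtain ⟨c, rfl⟩ := hq
    -- pz + c * x = z * u
    have key : x * (z * v - y * c) ∈ B := by
      have : x * (z * v - y * c) = y * pz - z * p := by linear_combination z * hyu - y * hzu
      rw [this]
      exact sub_mem (Ideal.mul_mem_left _ _ hpz) (Ideal.mul_mem_left _ _ hp)
    have := hx _ key
    have hzv : z * v = (z * v - y * c) + y * c := by ring
    rw [hzv]
    exact add_mem (Submodule.mem_sup_left this)
      (Submodule.mem_sup_right (Ideal.mul_mem_right _ _ (Ideal.mem_span_singleton_self y)))

/-- Moving a joint element to the front: if `z` is a nonzerodivisor modulo every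
prefix-extension of `B` along `xs`, then `xs` stays regular over `B ⊔ (z)`. -/
lemma regI_sup_joint {B : Ideal R} {xs : List R} {z : R} (hreg : regI B xs)
    (hz : ∀ k, nzdI (extI B (xs.take k)) z) : regI (B ⊔ Ideal.span {z}) xs := by
  induction xs generalizing B with
  | nil => trivial
  | cons x l ih =>
    obtain ⟨hx, hl⟩ := hreg
    constructor
    · exact nzdI_swap hx (by simpa using hz 1)
    · rw [sup_right_comm]
      exact ih hl fun k => by simpa using hz (k + 1)

end General

section Noeth
variable {R : Type*} [CommRing R] [IsNoetherianRing R]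

open Ideal

/-- Primary decomposition packaging: a finite set of primes covering the zero divisors
mod `C`, each of which is the radical of a colon ideal `(C : g)` with `g ∉ C`. -/
lemma exists_prime_cover (C : Ideal R) :
    ∃ PP : Finset (Ideal R), (∀ P ∈ PP, P.IsPrime) ∧
      (∀ z g : R, z * g ∈ C → g ∉ C → ∃ P ∈ PP, z ∈ P) ∧
      (∀ P ∈ PP, ∃ g, g ∉ C ∧ P ≤ (C.colon (Ideal.span {g})).radical) := by
  classical
  obtain ⟨t, htC, htP, -, htmin⟩ := Ideal.IsLasker.minimal (Ideal.isLasker R R) C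
  refine ⟨t.image Ideal.radical, ?_, ?_, ?_⟩
  · intro P hP
    obtain ⟨Q, hQ, rfl⟩ := Finset.mem_image.1 hP
    exact Ideal.isPrime_radical (htP hQ)
  · intro z g hzg hg
    have : ¬ ∀ Q ∈ t, g ∈ Q := by
      intro h
      exact hg (htC ▸ (Submodule.mem_finsetInf.2 fun Q hQ => h Q hQ))
    push_neg at this
    obtain ⟨Q, hQ, hgQ⟩ := this
    refine ⟨Ideal.radical Q, Finset.mem_image_of_mem _ hQ, ?_⟩
    have hQC : z * g ∈ Q := by
      have : C ≤ Q := htC ▸ Finset.inf_le hQ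
      exact this hzg
    rcases ((Ideal.isPrimary_iff.1 (htP hQ)).2 (mul_comm z g ▸ hQC)) with h | h
    · exact absurd h hgQ
    · exact h
  · intro P hP
    obtain ⟨Q, hQ, rfl⟩ := Finset.mem_image.1 hP
    have := htmin hQ
    have : ∃ g, g ∈ (t.erase Q).inf id ∧ g ∉ Q := by
      by_contra h
      push_neg at h
      exact htmin hQ fun x hx => h x hx
    obtain ⟨g, hg1, hg2⟩ := this
    refine ⟨g, fun hgC => hg2 ((htC ▸ Finset.inf_le hQ : C ≤ Q) hgC), ?_⟩
    intro z hz
    obtain ⟨k, hk⟩ := Ideal.mem_radical_iff.1 hz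
    refine Ideal.mem_radical_iff.2 ⟨k, ?_⟩
    rw [Ideal.mem_colon_span_singleton]
    have : z ^ k * g ∈ t.inf id := by
      rw [← Finset.insert_erase hQ, Finset.inf_insert]
      refine Submodule.mem_inf.2 ⟨Ideal.mul_mem_right _ _ hk, Ideal.mul_mem_left _ _ hg1⟩
    rwa [htC] at this

/-- From containment of a f.g. ideal `J` in one of the covering primes, extract a
socle witness. -/
lemma socI_of_le_prime {J C : Ideal R} (hJ : J.FG) {g : R} (hg : g ∉ C)
    (hle : J ≤ (C.colon (Ideal.span {g})).radical) : socI J C := by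
  obtain ⟨N, hN⟩ := Ideal.exists_pow_le_of_le_radical_of_fg hle hJ
  have hex : ∃ N, ∀ w ∈ J ^ N, w * g ∈ C :=
    ⟨N, fun w hw => Ideal.mem_colon_span_singleton.1 (hN hw)⟩
  classical
  have hN₀ : ∀ w ∈ J ^ Nat.find hex, w * g ∈ C := Nat.find_spec hex
  have hpos : 0 < Nat.find hex := by
    rcases Nat.eq_zero_or_pos (Nat.find hex) with h | h
    · exfalso
      have h1 : (1 : R) ∈ J ^ Nat.find hex := by rw [h, pow_zero, Ideal.one_eq_top]; trivial
      exact hg (by simpa using hN₀ 1 h1)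
    · exact h
  have hlt : ¬ ∀ w ∈ J ^ (Nat.find hex - 1), w * g ∈ C :=
    Nat.find_min hex (by omega)
  push_neg at hlt
  obtain ⟨w, hw, hwg⟩ := hlt
  refine ⟨w * g, hwg, fun z hz => ?_⟩
  have h2 : z * (w * g) = (z * w) * g := by ring
  rw [h2]
  refine hN₀ _ ?_
  have h3 : J ^ Nat.find hex = J * J ^ (Nat.find hex - 1) := by
    conv_lhs => rw [← Nat.succ_pred_eq_of_pos hpos]
    rw [pow_succ', Nat.pred_eq_sub_one]
  rw [h3]
  exact Ideal.mul_mem_mul hz hw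

/-- Avoidance: a f.g. ideal `J` possessing, for each ideal in a finite list, some
nonzerodivisor from `J`, possesses a simultaneous one. -/
lemma exists_common_nzd {J : Ideal R} (hJ : J.FG) (Cs : List (Ideal R))
    (h : ∀ C ∈ Cs, ∃ e ∈ J, nzdI C e) : ∃ z ∈ J, ∀ C ∈ Cs, nzdI C z := by
  classical
  by_contra hcon
  push_neg at hcon
  choose PP hPPp hPPz hPPg using fun C : Ideal R => exists_prime_cover C
  set T : Finset (Ideal R) := Cs.toFinset.biUnion PP with hT
  have hsub : (J : Set R) ⊆ ⋃ P ∈ (T : Set (Ideal R)), (id P : Ideal R) := by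
    intro z hz
    obtain ⟨C, hC, hnz⟩ := hcon z hz
    rw [nzdI] at hnz
    push_neg at hnz
    obtain ⟨g, hzg, hg⟩ := hnz
    obtain ⟨P, hP, hzP⟩ := hPPz C z g hzg hg
    simp only [Set.mem_iUnion]
    exact ⟨P, by simp [hT, Finset.mem_biUnion]; exact ⟨C, hC, hP⟩, hzP⟩
  have hprime : ∀ P ∈ T, P ≠ ⊥ → P ≠ ⊥ → (id P : Ideal R).IsPrime := by
    intro P hP _ _
    obtain ⟨C, hC, hPC⟩ := Finset.mem_biUnion.1 hP
    exact hPPp C P hPC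
  obtain ⟨P, hPT, hJP⟩ := (Ideal.subset_union_prime (⊥ : Ideal R) (⊥ : Ideal R) hprime).1 hsub
  obtain ⟨C, hC, hPC⟩ := Finset.mem_biUnion.1 hPT
  obtain ⟨g, hg, hle⟩ := hPPg C P hPC
  obtain ⟨u, hu, hJu⟩ := socI_of_le_prime hJ hg (le_trans hJP hle)
  obtain ⟨e, heJ, hnzd⟩ := h C (List.mem_toFinset.1 hC)
  exact hu (hnzd u (hJu e heJ))

end Noeth

section Exchange
variable {R : Type*} [CommRing R] [IsNoetherianRing R]

/-- The exchange theorem: a socle witness transfers between any two regular sequences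
(over a common base `B`) of the same length consisting of elements of a f.g. ideal `J`. -/
lemma socI_exchange {J : Ideal R} (hJ : J.FG) :
    ∀ (r : ℕ) (B : Ideal R) (xs ys : List R), xs.length = r → ys.length = r →
      (∀ x ∈ xs, x ∈ J) → (∀ y ∈ ys, y ∈ J) → regI B xs → regI B ys →
      socI J (extI B xs) → socI J (extI B ys) := by
  intro r
  induction r with
  | zero =>
    intro B xs ys hx hy _ _ _ _ hsoc
    rw [List.length_eq_zero_iff] at hx hy
    subst hx; subst hy
    exact hsoc
  | succ r ih =>
    intro B xs ys hxl hyl hxJ hyJ hxreg hyreg hsoc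
    have hxne : xs ≠ [] := by intro h; rw [h] at hxl; simp at hxl
    have hyne : ys ≠ [] := by intro h; rw [h] at hyl; simp at hyl
    obtain ⟨xs', x, rfl⟩ : ∃ l a, xs = l ++ [a] :=
      ⟨xs.dropLast, xs.getLast hxne, (List.dropLast_append_getLast hxne).symm⟩
    obtain ⟨ys', y, rfl⟩ : ∃ l a, ys = l ++ [a] :=
      ⟨ys.dropLast, ys.getLast hyne, (List.dropLast_append_getLast hyne).symm⟩
    rw [List.length_append, List.length_singleton] at hxl hyl
    have hxl' : xs'.length = r := by omega
    have hyl' : ys'.length = r := by omega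
    obtain ⟨hxreg', hxnzd⟩ := (regI_concat B xs' x).1 hxreg
    obtain ⟨hyreg', hynzd⟩ := (regI_concat B ys' y).1 hyreg
    -- (a) find a joint element z
    have hprefixes : ∀ C ∈ ((List.range (r+1)).map (fun k => extI B ((xs' ++ [x]).take k)) ++
        (List.range (r+1)).map (fun k => extI B ((ys' ++ [y]).take k))), ∃ e ∈ J, nzdI C e := by
      intro C hC
      rw [List.mem_append] at hC
      rcases hC with hC | hC <;>
      · rw [List.mem_map] at hC
        obtain ⟨k, hk, rfl⟩ := hC
        rw [List.mem_range] at hk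
        first
        | exact ⟨(xs' ++ [x]).get ⟨k, by simp; omega⟩,
            hxJ _ (List.get_mem _ _), regI_nzd_prefix _ _ hxreg k (by simp; omega)⟩
        | exact ⟨(ys' ++ [y]).get ⟨k, by simp; omega⟩,
            hyJ _ (List.get_mem _ _), regI_nzd_prefix _ _ hyreg k (by simp; omega)⟩
    obtain ⟨z, hzJ, hznzd⟩ := exists_common_nzd hJ _ hprefixes
    have hzx : ∀ k, k ≤ r → nzdI (extI B (xs'.take k)) z := by
      intro k hk
      have := hznzd (extI B ((xs' ++ [x]).take k)) (by
        rw [List.mem_append]; left; rw [List.mem_map]; exact ⟨k, by rw [List.mem_range]; omega, rfl⟩)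
      rwa [List.take_append_of_le_length (by omega)] at this
    have hzy : ∀ k, k ≤ r → nzdI (extI B (ys'.take k)) z := by
      intro k hk
      have := hznzd (extI B ((ys' ++ [y]).take k)) (by
        rw [List.mem_append]; right; rw [List.mem_map]; exact ⟨k, by rw [List.mem_range]; omega, rfl⟩)
      rwa [List.take_append_of_le_length (by omega)] at this
    have hzxs' : nzdI (extI B xs') z := by
      have := hzx r (le_refl r)
      rwa [← hxl', List.take_length] at this
    have hzys' : nzdI (extI B ys') z := by
      have := hzy r (le_refl r)
      rwa [← hyl', List.take_length] at this
    -- (b) exchange x for z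
    rw [extI_concat] at hsoc
    have hsoc2 : socI J (extI B xs' ⊔ Ideal.span {z}) :=
      socI_exchange_one hxnzd hzxs' hzJ hsoc
    -- (c) apply the induction hypothesis over base B ⊔ (z)
    have hzx' : ∀ k, nzdI (extI B (xs'.take k)) z := by
      intro k
      rcases le_or_gt k r with hk | hk
      · exact hzx k hk
      · rw [List.take_of_length_le (by omega)]
        exact hzxs'
    have hzy' : ∀ k, nzdI (extI B (ys'.take k)) z := by
      intro k
      rcases le_or_gt k r with hk | hk
      · exact hzy k hk
      · rw [List.take_of_length_le (by omega)]
        exact hzys'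
    have hxregz : regI (B ⊔ Ideal.span {z}) xs' := regI_sup_joint hxreg' hzx'
    have hyregz : regI (B ⊔ Ideal.span {z}) ys' := regI_sup_joint hyreg' hzy'
    have hsoc3 : socI J (extI (B ⊔ Ideal.span {z}) ys') := by
      refine ih (B ⊔ Ideal.span {z}) xs' ys' hxl' hyl'
        (fun a ha => hxJ a (List.mem_append_left _ ha))
        (fun a ha => hyJ a (List.mem_append_left _ ha)) hxregz hyregz ?_
      rw [extI_sup]
      exact hsoc2
    rw [extI_sup] at hsoc3
    -- (d) exchange z back for y
    rw [extI_concat]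
    exact socI_exchange_one hzys' hynzd (hyJ y (List.mem_append_right _ (List.mem_singleton_self y))) hsoc3

end Exchange
section Avoid
variable {K : Type*} [Field K] [Infinite K] {M : Type*} [AddCommGroup M] [Module K M]

/-- Over an infinite field, an element of `W` avoiding finitely many subspaces none of
which contains `W`. -/
lemma avoid_subspaces (W : Submodule K M) (L : List (Submodule K M))
    (h : ∀ V ∈ L, ¬ W ≤ V) : ∃ w ∈ W, ∀ V ∈ L, w ∉ V := by
  classical
  induction L with
  | nil => exact ⟨0, W.zero_mem, by simp⟩
  | cons V L ih =>
    obtain ⟨c, hcW, hc⟩ := ih (fun V hV => h V (List.mem_cons_of_mem _ hV))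
    have hV : ¬ W ≤ V := h V List.mem_cons_self
    obtain ⟨d, hdW, hdV⟩ := SetLike.not_le_iff_exists.1 hV
    -- bad parameter sets are subsingletons
    have hbad : ∀ U ∈ V :: L, {t : K | c + t • d ∈ U}.Subsingleton := by
      intro U hU t₁ ht₁ t₂ ht₂
      by_contra hne
      have hd : d ∈ U := by
        have := U.sub_mem ht₁ ht₂
        have h2 : (c + t₁ • d) - (c + t₂ • d) = (t₁ - t₂) • d := by
          rw [sub_smul]; abel
        rw [h2] at this
        have h3 : t₁ - t₂ ≠ 0 := sub_ne_zero.2 hne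
        have := U.smul_mem (t₁ - t₂)⁻¹ this
        rwa [inv_smul_smul₀ h3] at this
      rcases List.mem_cons.1 hU with rfl | hU'
      · exact hdV hd
      · have : c ∈ U := by
          have := U.sub_mem ht₁ (U.smul_mem t₁ hd)
          simpa using this
        exact hc U hU' this
    have hfin : {t : K | ∃ U ∈ V :: L, c + t • d ∈ U}.Finite := by
      have : {t : K | ∃ U ∈ V :: L, c + t • d ∈ U} =
          ⋃ U ∈ (V :: L).toFinset, {t : K | c + t • d ∈ U} := by
        ext t; simp [List.mem_toFinset]
      rw [this]
      refine Set.Finite.biUnion (Finset.finite_toSet _) ?_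
      intro U hU
      exact Set.Subsingleton.finite (hbad U (List.mem_toFinset.1 hU))
    obtain ⟨t, ht⟩ := Set.Infinite.nonempty (Set.Finite.infinite_compl hfin)
    refine ⟨c + t • d, W.add_mem hcW (W.smul_mem t hdW), ?_⟩
    intro U hU hmem
    exact ht ⟨U, hU, hmem⟩

end Avoid

section Vars
open MvPolynomial
variable {K : Type} [Field K] {n : ℕ}

local notation "S" => MvPolynomial (Fin n) K

/-- A variable not occurring in `T` is a nonzerodivisor modulo the span of `X '' T`. -/
lemma nzdI_X {T : Set (Fin n)} {i : Fin n} (hi : i ∉ T) :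
    nzdI (Ideal.span (X '' T : Set S)) (X i) := by
  intro g hg
  rw [mem_ideal_span_X_image] at hg ⊢
  intro m hm
  have hcoeff : coeff (Finsupp.single i 1 + m) (X i * g) ≠ 0 := by
    rw [coeff_X_mul]
    exact mem_support_iff.1 hm
  obtain ⟨j, hj, hjm⟩ := hg _ (mem_support_iff.2 hcoeff)
  refine ⟨j, hj, ?_⟩
  have hne : j ≠ i := fun h => hi (h ▸ hj)
  simpa [Finsupp.single_apply, hne.symm] using hjm

/-- Membership in the irrelevant ideal. -/
lemma mem_span_range_X_iff {p : S} :
    p ∈ Ideal.span (Set.range (X : Fin n → S)) ↔ constantCoeff p = 0 := by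
  rw [← Set.image_univ, mem_ideal_span_X_image]
  have hcc : constantCoeff p = coeff 0 p := rfl
  rw [hcc]
  constructor
  · intro h
    by_contra hc
    obtain ⟨i, -, hi⟩ := h 0 (mem_support_iff.2 hc)
    simp at hi
  · intro h m hm
    have hm0 : m ≠ 0 := by
      intro hme; rw [hme] at hm; exact mem_support_iff.1 hm h
    obtain ⟨i, hi⟩ := Finsupp.ne_iff.1 hm0
    exact ⟨i, Set.mem_univ _, by simpa using hi⟩

end Vars

section Conversion
variable {R : Type*} [CommRing R]

lemma image_lt_succ_eq {α : Type*} {s : ℕ} (φ : Fin (s+1) → α) (i : Fin s) :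
    φ '' {j : Fin (s+1) | j < i.succ} = {φ 0} ∪ (φ ∘ Fin.succ) '' {j : Fin s | j < i} := by
  ext y
  simp only [Set.mem_image, Set.mem_setOf_eq, Set.mem_union, Set.mem_singleton_iff,
    Function.comp_apply]
  constructor
  · rintro ⟨j, hj, rfl⟩
    rcases Fin.eq_zero_or_eq_succ j with rfl | ⟨j', rfl⟩
    · exact Or.inl rfl
    · exact Or.inr ⟨j', by rwa [Fin.succ_lt_succ_iff] at hj, rfl⟩
  · rintro (rfl | ⟨j', hj', rfl⟩)
    · exact ⟨0, Fin.succ_pos i, rfl⟩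
    · exact ⟨j'.succ, Fin.succ_lt_succ_iff.2 hj', rfl⟩

lemma regI_ofFn {s : ℕ} (B : Ideal R) (φ : Fin s → R)
    (h : ∀ i : Fin s, nzdI (B ⊔ Ideal.span (φ '' {j | j < i})) (φ i)) :
    regI B (List.ofFn φ) := by
  induction s generalizing B with
  | zero => simp [regI]
  | succ s ih =>
    rw [List.ofFn_succ]
    refine ⟨?_, ?_⟩
    · have := h 0
      have h0 : {j : Fin (s+1) | j < 0} = ∅ := by ext j; simp
      rwa [h0, Set.image_empty, Ideal.span_empty, sup_bot_eq] at this
    · refine ih (B ⊔ Ideal.span {φ 0}) (φ ∘ Fin.succ) ?_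
      intro i
      have := h i.succ
      rwa [image_lt_succ_eq, Ideal.span_union, ← sup_assoc] at this

lemma extI_ofFn {s : ℕ} (B : Ideal R) (φ : Fin s → R) :
    extI B (List.ofFn φ) = B ⊔ Ideal.span (Set.range φ) := by
  induction s generalizing B with
  | zero =>
    simp [Set.range_eq_empty]
  | succ s ih =>
    rw [List.ofFn_succ, extI_cons, ih]
    have : Set.range φ = insert (φ 0) (Set.range (φ ∘ Fin.succ)) := by
      conv_lhs => rw [← Fin.cons_self_tail φ]
      rw [Fin.range_cons]
      rfl
    rw [this, Ideal.span_insert, ← sup_assoc]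
    rfl

end Conversion

section Step
open MvPolynomial
variable {K : Type} [Field K] [Infinite K] {n : ℕ}

local notation "S" => MvPolynomial (Fin n) K

/-- Positive-degree homogeneous polynomials lie in the irrelevant ideal. -/
lemma mem_irrelevant_of_homog {p : S} {d : ℕ} (hd : 1 ≤ d) (hp : p.IsHomogeneous d) :
    p ∈ Ideal.span (Set.range (X : Fin n → S)) := by
  rw [mem_span_range_X_iff]
  have : constantCoeff p = coeff 0 p := rfl
  rw [this]
  refine hp.coeff_eq_zero ?_
  rw [map_zero]
  omega

/-- The main step: a homogeneous regular sequence of length `s < n` admits a homogeneous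
nonzerodivisor of any prescribed positive degree. -/
lemma step_lemma {s : ℕ} (hs : s < n) (f : Fin s → S)
    (hreg : ∀ i : Fin s, nzdI (Ideal.span (f '' {j | j < i})) (f i))
    (hfJ : ∀ i, f i ∈ Ideal.span (Set.range (X : Fin n → S))) (a : ℕ) (ha : 1 ≤ a) :
    ∃ h : S, h.IsHomogeneous a ∧ nzdI (Ideal.span (Set.range f)) h := by
  classical
  set I : Ideal S := Ideal.span (Set.range f) with hI
  set J : Ideal S := Ideal.span (Set.range (X : Fin n → S)) with hJ
  have hJfg : J.FG := Submodule.fg_span (Set.finite_range _)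
  obtain ⟨PP, hPp, hPz, hPg⟩ := exists_prime_cover I
  -- no covering prime contains J
  have hclaim : ∀ P ∈ PP, ¬ J ≤ P := by
    intro P hP hJP
    obtain ⟨g, hgI, hle⟩ := hPg P hP
    have hsoc : socI J I := socI_of_le_prime hJfg hgI (le_trans hJP hle)
    -- transfer the socle witness to the variable ideal
    set v : Fin s → S := fun j => X (Fin.castLE hs.le j) with hv
    have hregv : regI ⊥ (List.ofFn v) := by
      refine regI_ofFn _ _ fun i => ?_
      have himg : v '' {j | j < i} = X '' (Fin.castLE hs.le '' {j | j < i}) := by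
        rw [← Set.image_comp]; rfl
      rw [bot_sup_eq, himg]
      refine nzdI_X ?_
      rintro ⟨j, hj, hji⟩
      have h1 : (j : ℕ) < (i : ℕ) := hj
      have h2 : (j : ℕ) = (i : ℕ) := by
        have := congrArg Fin.val hji
        simpa using this
      omega
    have hregf : regI ⊥ (List.ofFn f) := by
      refine regI_ofFn _ _ fun i => ?_
      rw [bot_sup_eq]
      exact hreg i
    have hsocv : socI J (extI ⊥ (List.ofFn v)) := by
      refine socI_exchange hJfg s ⊥ (List.ofFn f) (List.ofFn v) (by simp) (by simp)
        ?_ ?_ hregf hregv ?_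
      · intro x hx
        obtain ⟨i, rfl⟩ := List.mem_ofFn.1 hx
        exact hfJ i
      · intro y hy
        obtain ⟨i, rfl⟩ := List.mem_ofFn.1 hy
        exact Ideal.subset_span (Set.mem_range_self _)
      · rw [extI_ofFn, bot_sup_eq]
        exact hsoc
    rw [extI_ofFn, bot_sup_eq] at hsocv
    obtain ⟨u, hu, hJu⟩ := hsocv
    -- the next variable kills the witness
    have hrange : Set.range v = X '' (Set.range (Fin.castLE hs.le)) := by
      show Set.range (X ∘ Fin.castLE hs.le) = _
      rw [Set.range_comp]
    have hnz : nzdI (Ideal.span (Set.range v)) (X ⟨s, hs⟩) := by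
      rw [hrange]
      refine nzdI_X ?_
      rintro ⟨j, hj⟩
      have := congrArg Fin.val hj
      simp only [Fin.coe_castLE] at this
      omega
    exact hu (hnz u (hJu _ (Ideal.subset_span (Set.mem_range_self _))))
  -- avoidance: a linear form outside all covering primes
  set W : Submodule K S := Submodule.span K (Set.range (X : Fin n → S)) with hW
  have hW1 : ∀ w ∈ W, MvPolynomial.IsHomogeneous w 1 := by
    intro w hw
    have : W ≤ (homogeneousSubmodule (Fin n) K 1) := by
      rw [hW, Submodule.span_le]
      rintro _ ⟨i, rfl⟩
      rw [SetLike.mem_coe, mem_homogeneousSubmodule]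
      exact isHomogeneous_X _ _
    exact (mem_homogeneousSubmodule _ _).1 (this hw)
  have havoid : ∃ w ∈ W, ∀ P ∈ PP, w ∉ Submodule.restrictScalars K P := by
    have := avoid_subspaces W (PP.toList.map (Submodule.restrictScalars K)) ?_
    · obtain ⟨w, hwW, hw⟩ := this
      exact ⟨w, hwW, fun P hP => hw _ (List.mem_map.2 ⟨P, (Finset.mem_toList).2 hP, rfl⟩)⟩
    · intro V hV
      obtain ⟨P, hP, rfl⟩ := List.mem_map.1 hV
      intro hWP
      refine hclaim P (Finset.mem_toList.1 hP) ?_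
      rw [hJ, Ideal.span_le]
      rintro _ ⟨i, rfl⟩
      have : X i ∈ W := Submodule.subset_span (Set.mem_range_self _)
      exact hWP this
  obtain ⟨ℓ, hℓW, hℓP⟩ := havoid
  refine ⟨ℓ ^ a, by simpa using (hW1 ℓ hℓW).pow a, ?_⟩
  intro g hg
  by_contra hgI
  obtain ⟨P, hP, hmem⟩ := hPz _ g hg hgI
  exact hℓP P hP ((hPp P hP).mem_of_pow_mem a hmem)

end Step

section Assemble
open MvPolynomial
variable {K : Type} [Field K] [Infinite K] {n : ℕ}

local notation "S" => MvPolynomial (Fin n) K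

lemma homog_zero_eq_C {p : S} (hp : p.IsHomogeneous 0) : p = C (constantCoeff p) := by
  apply MvPolynomial.ext
  intro m
  rcases eq_or_ne m 0 with rfl | hm
  · rw [coeff_C, if_pos rfl]
    rfl
  · rw [hp.coeff_eq_zero (by rwa [Ne, Finsupp.degree_eq_zero_iff]), coeff_C, if_neg (Ne.symm hm)]

/-- Elements of a homogeneous regular sequence lie in the irrelevant ideal. -/
lemma regseq_mem_irrelevant {r : ℕ} {f : Fin r → S} {b : Fin r → ℕ}
    (hreg : IsRegSeq f) (hhom : ∀ i, (f i).IsHomogeneous (b i)) (i : Fin r) :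
    f i ∈ Ideal.span (Set.range (X : Fin n → S)) := by
  rcases Nat.eq_zero_or_pos (b i) with hb | hb
  · rw [mem_span_range_X_iff]
    by_contra hc
    -- f i is a nonzero constant, hence a unit, contradicting properness
    have hfi : f i = C (constantCoeff (f i)) := homog_zero_eq_C (hb ▸ hhom i)
    refine hreg.1 (Ideal.eq_top_of_isUnit_mem _ (Ideal.subset_span (Set.mem_range_self i)) ?_)
    rw [hfi]
    exact (Ne.isUnit hc).map (C : K →+* MvPolynomial (Fin n) K)
  · exact mem_irrelevant_of_homog hb (hhom i)

lemma snoc_image_lt_last {r : ℕ} (g' : Fin r → S) (h : S) :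
    (Fin.snoc g' h : Fin (r+1) → S) '' {j | j < Fin.last r} = Set.range g' := by
  ext y
  constructor
  · rintro ⟨j, hj, rfl⟩
    obtain ⟨j', rfl⟩ := Fin.exists_castSucc_eq.2 (Fin.lt_last_iff_ne_last.1 hj)
    rw [Fin.snoc_castSucc]
    exact Set.mem_range_self _
  · rintro ⟨j', rfl⟩
    exact ⟨Fin.castSucc j', Fin.castSucc_lt_last j', Fin.snoc_castSucc _ _ _⟩

lemma snoc_image_lt_castSucc {r : ℕ} (g' : Fin r → S) (h : S) (i : Fin r) :
    (Fin.snoc g' h : Fin (r+1) → S) '' {j | j < Fin.castSucc i} = g' '' {j | j < i} := by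
  ext y
  constructor
  · rintro ⟨j, hj, rfl⟩
    have hjl : j ≠ Fin.last r := Fin.ne_of_lt (lt_of_lt_of_le hj (Fin.le_last _))
    obtain ⟨j', rfl⟩ := Fin.exists_castSucc_eq.2 hjl
    rw [Fin.snoc_castSucc]
    exact ⟨j', Fin.castSucc_lt_castSucc_iff.1 hj, rfl⟩
  · rintro ⟨j', hj', rfl⟩
    exact ⟨Fin.castSucc j', Fin.castSucc_lt_castSucc_iff.2 hj', Fin.snoc_castSucc _ _ _⟩

/-- One-step extension of a regular sequence, as `Fin.snoc`. -/
lemma snoc_regseq {r : ℕ} (hr : r < n) (g' : Fin r → S) (hreg : IsRegSeq g')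
    (hJ : ∀ i, g' i ∈ Ideal.span (Set.range (X : Fin n → S))) {a : ℕ} (ha : 1 ≤ a) :
    ∃ h : S, h.IsHomogeneous a ∧ IsRegSeq (Fin.snoc g' h : Fin (r+1) → S) := by
  obtain ⟨h, hhom, hnzd⟩ := step_lemma hr g' (fun i => fun g hg => hreg.2 i g hg) hJ a ha
  refine ⟨h, hhom, ?_, ?_⟩
  · -- properness
    intro htop
    have hle : Ideal.span (Set.range (Fin.snoc g' h : Fin (r+1) → S)) ≤
        Ideal.span (Set.range (X : Fin n → S)) := by
      rw [Ideal.span_le]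
      rintro _ ⟨i, rfl⟩
      refine Fin.lastCases ?_ ?_ i
      · rw [Fin.snoc_last]
        exact mem_irrelevant_of_homog ha hhom
      · intro j
        rw [Fin.snoc_castSucc]
        exact hJ j
    rw [htop] at hle
    have h1 : (1 : S) ∈ Ideal.span (Set.range (X : Fin n → S)) := hle trivial
    rw [mem_span_range_X_iff] at h1
    simp at h1
  · -- regularity conditions
    intro i
    refine Fin.lastCases ?_ ?_ i
    · rw [snoc_image_lt_last, Fin.snoc_last]
      exact fun g hg => hnzd g hg
    · intro j g
      rw [snoc_image_lt_castSucc, Fin.snoc_castSucc]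
      exact hreg.2 j g

end Assemble

section Final
open MvPolynomial
variable {K : Type} [Field K] [Infinite K] {n : ℕ}

local notation "S" => MvPolynomial (Fin n) K

lemma extend_many {r : ℕ} (f : Fin r → S) (hreg : IsRegSeq f)
    (hJ : ∀ i, f i ∈ Ideal.span (Set.range (X : Fin n → S))) :
    ∀ t, r + t ≤ n → ∀ a : Fin (r+t) → ℕ, (∀ i : Fin (r+t), r ≤ i.val → 1 ≤ a i) →
    ∃ g : Fin (r+t) → S,
      (∀ i : Fin r, g (Fin.castLE (Nat.le_add_right r t) i) = f i) ∧
      (∀ i, g i ∈ Ideal.span (Set.range (X : Fin n → S))) ∧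
      (∀ i : Fin (r+t), r ≤ i.val → (g i).IsHomogeneous (a i)) ∧
      IsRegSeq g := by
  intro t
  induction t with
  | zero =>
    intro _ a ha
    refine ⟨f, fun i => by apply congrArg; exact Fin.ext rfl, hJ, fun i hi => ?_, hreg⟩
    exact absurd (lt_of_le_of_lt hi i.isLt) (by omega)
  | succ t ih =>
    intro hle a ha
    obtain ⟨g', hg'f, hg'J, hg'hom, hg'reg⟩ := ih (by omega) (fun i => a (Fin.castSucc i))
      (fun i hi => ha (Fin.castSucc i) hi)
    have hrt : r + t < n := by omega
    have halast : 1 ≤ a (Fin.last (r+t)) := ha _ (by rw [Fin.val_last]; omega)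
    obtain ⟨h, hhom, hsnocreg⟩ := snoc_regseq hrt g' hg'reg hg'J halast
    refine ⟨Fin.snoc g' h, ?_, ?_, ?_, hsnocreg⟩
    · intro i
      have hcast : (Fin.castLE (Nat.le_add_right r (t+1)) i) =
          Fin.castSucc (Fin.castLE (Nat.le_add_right r t) i) := Fin.ext rfl
      rw [hcast, Fin.snoc_castSucc]
      exact hg'f i
    · intro i
      refine Fin.lastCases ?_ ?_ i
      · rw [Fin.snoc_last]
        exact mem_irrelevant_of_homog halast hhom
      · intro j
        rw [Fin.snoc_castSucc]
        exact hg'J j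
    · intro i hi
      refine Fin.lastCases (fun _ => ?_) (fun j hj => ?_) i hi
      · rw [Fin.snoc_last]
        exact hhom
      · rw [Fin.snoc_castSucc]
        exact hg'hom j hj


/-- over an infinite field a homogeneous regular sequence of length `r < m ≤ n`
can be extended to a homogeneous regular sequence of length `m` with prescribed positive
degrees for the new elements. -/
theorem stmt3 {K : Type} [Field K] [Infinite K] {n r m : ℕ} (hrm : r < m) (hmn : m ≤ n)
    (f : Fin r → MvPolynomial (Fin n) K) (b : Fin r → ℕ)
    (hreg : IsRegSeq f) (hhom : ∀ i, (f i).IsHomogeneous (b i))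
    (a : Fin m → ℕ) (ha : ∀ i : Fin m, r ≤ i.val → 0 < a i) :
    ∃ g : Fin m → MvPolynomial (Fin n) K,
      (∀ i : Fin r, g (Fin.castLE hrm.le i) = f i) ∧
      (∀ i : Fin m, r ≤ i.val → (g i).IsHomogeneous (a i)) ∧
      IsRegSeq g := by
  obtain ⟨t, rfl⟩ : ∃ t, m = r + t := ⟨m - r, by omega⟩
  obtain ⟨g, hg1, _, hg3, hg4⟩ := extend_many f hreg
    (regseq_mem_irrelevant hreg hhom) t hmn a ha
  exact ⟨g, hg1, hg3, hg4⟩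

end Final
end

section
/- For any homogeneous ideal I of S = k[x_1,...,x_n], a linear form g, and N such that (I : g^N) = (I : g^{N+1}), one has H(S/I, t) = Σ_{j=0}^t H(S/((I : g^j) + (g)), t − j) for all t. -/
open MvPolynomial

section Aux

variable {K : Type} [Field K]

/-- rank-nullity for a restriction of a linear map to a submodule. -/
lemma finrank_map_add_inf {M N : Type*} [AddCommGroup M] [Module K M]
    [AddCommGroup N] [Module K N] (f : M →ₗ[K] N) (p : Submodule K M)
    [FiniteDimensional K p] :
    Module.finrank K (p.map f) + Module.finrank K ↥(LinearMap.ker f ⊓ p) =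
      Module.finrank K p := by
  have h1 : LinearMap.range (f.comp p.subtype) = p.map f := by
    rw [LinearMap.range_comp, Submodule.range_subtype]
  have h2 : LinearMap.ker (f.comp p.subtype) =
      Submodule.comap p.subtype (LinearMap.ker f ⊓ p) := by
    rw [LinearMap.ker_comp, Submodule.comap_inf, Submodule.comap_subtype_self, inf_top_eq]
  have e := Submodule.comapSubtypeEquivOfLe (inf_le_right : LinearMap.ker f ⊓ p ≤ p)
  have := LinearMap.finrank_range_add_finrank_ker (f.comp p.subtype)
  rw [h1, h2, e.finrank_eq] at this
  exact this

variable {n : ℕ}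

local notation "V" => homogeneousSubmodule (Fin n) K

instance finV (d : ℕ) : FiniteDimensional K (V d) := by
  refine Submodule.finiteDimensional_of_le (S₂ := restrictTotalDegree (Fin n) K d) ?_
  intro p hp
  rw [mem_restrictTotalDegree]
  exact ((mem_homogeneousSubmodule _ _).mp hp).totalDegree_le

lemma hilbQ_add (J : Ideal (MvPolynomial (Fin n) K)) (d : ℕ) :
    hilbQ J d + Module.finrank K ↥(Submodule.restrictScalars K J ⊓ V d) =
      Module.finrank K (V d) := by
  have hk : LinearMap.ker (Ideal.Quotient.mkₐ K J).toLinearMap =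
      Submodule.restrictScalars K J := by
    ext x
    simp only [LinearMap.mem_ker, AlgHom.toLinearMap_apply, Ideal.Quotient.mkₐ_eq_mk,
      Ideal.Quotient.eq_zero_iff_mem, Submodule.restrictScalars_mem]
  have := finrank_map_add_inf (Ideal.Quotient.mkₐ K J).toLinearMap (V d)
  rw [hk] at this
  exact this

lemma hc_mul_homog {g q : MvPolynomial (Fin n) K} (hg : g.IsHomogeneous 1) (d : ℕ) :
    homogeneousComponent (d + 1) (g * q) = g * homogeneousComponent d q := by
  conv_lhs => rw [← sum_homogeneousComponent q, Finset.mul_sum, map_sum]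
  have : ∀ i : ℕ, homogeneousComponent (d + 1) (g * homogeneousComponent i q) =
      if d = i then g * homogeneousComponent i q else 0 := by
    intro i
    have hgi : (g * homogeneousComponent i q) ∈ V (1 + i) :=
      (mem_homogeneousSubmodule _ _).mpr (hg.mul (homogeneousComponent_isHomogeneous i q))
    rw [homogeneousComponent_of_mem hgi]
    congr 1
    simp only [eq_iff_iff]
    omega
  simp_rw [this]
  rw [Finset.sum_ite_eq (Finset.range (q.totalDegree + 1)) d
    (fun i => g * homogeneousComponent i q)]
  split_ifs with h
  · rfl
  · rw [Finset.mem_range, not_lt] at h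
    rw [homogeneousComponent_eq_zero _ _ (by omega), mul_zero]

lemma hc_zero_mul {g q : MvPolynomial (Fin n) K} (hg : g.IsHomogeneous 1) :
    homogeneousComponent 0 (g * q) = 0 := by
  rw [homogeneousComponent_zero]
  have : coeff 0 (g * q) = coeff 0 g * coeff 0 q := by
    simp [MvPolynomial.coeff_mul, Finset.Nat.antidiagonal_zero]
  rw [this, hg.coeff_eq_zero (by simp), zero_mul, map_zero]

end Aux
section Main

variable {K : Type} [Field K] {n : ℕ}

local notation "V" => homogeneousSubmodule (Fin n) K

variable {g : MvPolynomial (Fin n) K}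
variable (I : Ideal (MvPolynomial (Fin n) K))

lemma map_mul_le (hg : g.IsHomogeneous 1) (t : ℕ) :
    Submodule.map (LinearMap.mulLeft K g) (V t) ≤ V (t + 1) := by
  rintro x ⟨q, hq, rfl⟩
  have hq' := (mem_homogeneousSubmodule _ _).mp hq
  have := hg.mul hq'
  rw [Nat.add_comm] at this
  exact (mem_homogeneousSubmodule _ _).mpr this

lemma sup_inf_V_succ (hg : g.IsHomogeneous 1) (hI : IsHomog I) (t : ℕ) :
    Submodule.restrictScalars K (I ⊔ Ideal.span {g}) ⊓ V (t + 1) =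
      (Submodule.restrictScalars K I ⊓ V (t + 1)) ⊔
        Submodule.map (LinearMap.mulLeft K g) (V t) := by
  refine le_antisymm ?_ (sup_le (le_inf ?_ inf_le_right) (le_inf ?_ (map_mul_le hg t)))
  · rintro f ⟨hf1, hf2⟩
    simp only [SetLike.mem_coe, Submodule.restrictScalars_mem] at hf1
    obtain ⟨a, ha, b, hb, hab⟩ := Submodule.mem_sup.mp hf1
    obtain ⟨q, hq⟩ := Ideal.mem_span_singleton'.mp hb
    have hf : f = homogeneousComponent (t + 1) a + g * homogeneousComponent t q := by
      have h0 : homogeneousComponent (t + 1) f = f := by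
        rw [homogeneousComponent_of_mem hf2, if_pos rfl]
      conv_lhs => rw [← h0, ← hab, ← hq, map_add, mul_comm q g, hc_mul_homog hg]
    rw [hf]
    refine Submodule.add_mem_sup ⟨hI a ha (t + 1), ?_⟩ ⟨homogeneousComponent t q, ?_, rfl⟩
    · exact (mem_homogeneousSubmodule _ _).mpr (homogeneousComponent_isHomogeneous _ _)
    · exact (mem_homogeneousSubmodule _ _).mpr (homogeneousComponent_isHomogeneous _ _)
  · intro x hx
    exact Submodule.mem_sup_left (S := I) hx.1
  · rintro x ⟨q, hq, rfl⟩
    rw [Submodule.restrictScalars_mem, LinearMap.mulLeft_apply]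
    exact Submodule.mem_sup_right (Ideal.mem_span_singleton'.mpr ⟨q, mul_comm q g⟩)

lemma inf_map_eq (t : ℕ) :
    Submodule.restrictScalars K I ⊓ Submodule.map (LinearMap.mulLeft K g) (V t) =
      Submodule.map (LinearMap.mulLeft K g)
        (Submodule.restrictScalars K (Submodule.colon I (Ideal.span {g})) ⊓ V t) := by
  ext x
  simp only [Submodule.mem_inf, Submodule.mem_map, Submodule.restrictScalars_mem,
    LinearMap.mulLeft_apply, Ideal.mem_colon_span_singleton]
  constructor
  · rintro ⟨hxI, q, hq, rfl⟩
    exact ⟨q, ⟨⟨by rwa [mul_comm], hq⟩, rfl⟩⟩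
  · rintro ⟨q, ⟨hq1, hq2⟩, rfl⟩
    exact ⟨by rwa [mul_comm] at hq1, q, hq2, rfl⟩

lemma ker_inf_colon (t : ℕ) :
    LinearMap.ker (LinearMap.mulLeft K g) ⊓
        (Submodule.restrictScalars K (Submodule.colon I (Ideal.span {g})) ⊓ V t) =
      LinearMap.ker (LinearMap.mulLeft K g) ⊓ V t := by
  ext x
  simp only [Submodule.mem_inf, Submodule.restrictScalars_mem, LinearMap.mem_ker,
    LinearMap.mulLeft_apply, Ideal.mem_colon_span_singleton]
  constructor
  · rintro ⟨hk, _, hv⟩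
    exact ⟨hk, hv⟩
  · rintro ⟨hk, hv⟩
    exact ⟨hk, by rw [mul_comm, hk]; exact zero_mem I, hv⟩

end Main

section Count

variable {K : Type} [Field K] {n : ℕ}

local notation "V" => homogeneousSubmodule (Fin n) K

variable {g : MvPolynomial (Fin n) K}

lemma hilbQ_step (I : Ideal (MvPolynomial (Fin n) K)) (hI : IsHomog I)
    (hg : g.IsHomogeneous 1) (t : ℕ) :
    hilbQ I (t + 1) =
      hilbQ (I ⊔ Ideal.span {g}) (t + 1) +
        hilbQ (Submodule.colon I (Ideal.span {g})) t := by
  haveI : FiniteDimensional K ↥(Submodule.restrictScalars K I ⊓ V (t + 1)) :=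
    Submodule.finiteDimensional_of_le inf_le_right
  haveI : FiniteDimensional K
      ↥(Submodule.restrictScalars K (Submodule.colon I (Ideal.span {g})) ⊓ V t) :=
    Submodule.finiteDimensional_of_le inf_le_right
  have h2 := Submodule.finrank_sup_add_finrank_inf_eq
    (Submodule.restrictScalars K I ⊓ V (t + 1))
    (Submodule.map (LinearMap.mulLeft K g) (V t))
  have h3 : (Submodule.restrictScalars K I ⊓ V (t + 1)) ⊓
      Submodule.map (LinearMap.mulLeft K g) (V t) =
      Submodule.map (LinearMap.mulLeft K g)
        (Submodule.restrictScalars K (Submodule.colon I (Ideal.span {g})) ⊓ V t) := by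
    rw [inf_assoc, inf_eq_right.mpr (map_mul_le hg t), inf_map_eq]
  have h5 := finrank_map_add_inf (LinearMap.mulLeft K g)
    (Submodule.restrictScalars K (Submodule.colon I (Ideal.span {g})) ⊓ V t)
  rw [ker_inf_colon] at h5
  have h7 := finrank_map_add_inf (LinearMap.mulLeft K g) (V t)
  have e1 := hilbQ_add I (t + 1)
  have e2 := hilbQ_add (I ⊔ Ideal.span {g}) (t + 1)
  have e3 := hilbQ_add (Submodule.colon I (Ideal.span {g})) t
  rw [sup_inf_V_succ I hg hI t] at e2
  rw [h3] at h2
  omega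

lemma hilbQ_zero_step (I : Ideal (MvPolynomial (Fin n) K)) (hI : IsHomog I)
    (hg : g.IsHomogeneous 1) :
    hilbQ I 0 = hilbQ (I ⊔ Ideal.span {g}) 0 := by
  have key : Submodule.restrictScalars K (I ⊔ Ideal.span {g}) ⊓ V 0 =
      Submodule.restrictScalars K I ⊓ V 0 := by
    refine le_antisymm ?_ (inf_le_inf_right _ ?_)
    · rintro f ⟨hf1, hf2⟩
      simp only [SetLike.mem_coe, Submodule.restrictScalars_mem] at hf1
      obtain ⟨a, ha, b, hb, hab⟩ := Submodule.mem_sup.mp hf1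
      obtain ⟨q, hq⟩ := Ideal.mem_span_singleton'.mp hb
      have hf : f = homogeneousComponent 0 a := by
        have h0 : homogeneousComponent 0 f = f := by
          rw [homogeneousComponent_of_mem hf2, if_pos rfl]
        conv_lhs => rw [← h0, ← hab, ← hq, map_add, mul_comm q g, hc_zero_mul hg, add_zero]
      rw [hf]
      exact ⟨hI a ha 0,
        (mem_homogeneousSubmodule _ _).mpr (homogeneousComponent_isHomogeneous _ _)⟩
    · intro x hx
      exact Submodule.mem_sup_left (S := I) hx
  have e1 := hilbQ_add I 0
  have e2 := hilbQ_add (I ⊔ Ideal.span {g}) 0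
  rw [key] at e2
  omega

lemma isHomog_colon {I : Ideal (MvPolynomial (Fin n) K)} (hI : IsHomog I)
    (hg : g.IsHomogeneous 1) :
    IsHomog (Submodule.colon I (Ideal.span {g})) := by
  intro f hf d
  rw [Ideal.mem_colon_span_singleton] at hf ⊢
  rw [mul_comm, ← hc_mul_homog hg]
  exact hI (g * f) (by rwa [mul_comm]) (d + 1)

lemma colon_colon (I : Ideal (MvPolynomial (Fin n) K)) (j : ℕ) :
    Submodule.colon (Submodule.colon I (Ideal.span {g})) (Ideal.span {g ^ j}) =
      Submodule.colon I (Ideal.span {g ^ (j + 1)}) := by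
  ext x
  simp only [Ideal.mem_colon_span_singleton]
  rw [pow_succ, ← mul_assoc]

lemma colon_pow_zero (I : Ideal (MvPolynomial (Fin n) K)) :
    Submodule.colon I (Ideal.span {g ^ 0}) = I := by
  rw [pow_zero, Ideal.span_singleton_one, Submodule.top_coe, Submodule.colon_univ]

end Count

theorem stmt6' {K : Type} [Field K] {n : ℕ}
    (I : Ideal (MvPolynomial (Fin n) K)) (hI : IsHomog I)
    (g : MvPolynomial (Fin n) K) (hg : g.IsHomogeneous 1) :
    ∀ t : ℕ, hilbQ I t =
      ∑ j ∈ Finset.range (t + 1),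
        hilbQ (Submodule.colon I (Ideal.span {g ^ j}) ⊔ Ideal.span {g}) (t - j) := by
  intro t
  induction t generalizing I with
  | zero =>
    rw [Finset.sum_range_one, colon_pow_zero, Nat.sub_zero]
    exact hilbQ_zero_step I hI hg
  | succ t ih =>
    rw [hilbQ_step I hI hg t, Finset.sum_range_succ', colon_pow_zero, Nat.sub_zero,
      ih (Submodule.colon I (Ideal.span {g})) (isHomog_colon hI hg), add_comm]
    congr 1
    refine Finset.sum_congr rfl fun j hj => ?_
    rw [colon_colon, Nat.succ_sub_succ]

/-- if `(I : g^N) = (I : g^{N+1})` for a linear form `g`, then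
`H(S/I,t) = Σ_{j=0}^t H(S/((I:g^j)+(g)), t-j)` for all `t`. -/
theorem stmt6 {K : Type} [Field K] {n : ℕ}
    (I : Ideal (MvPolynomial (Fin n) K)) (hI : IsHomog I)
    (g : MvPolynomial (Fin n) K) (hg : g.IsHomogeneous 1)
    (N : ℕ)
    (hN : Submodule.colon I (Ideal.span {g ^ N}) =
      Submodule.colon I (Ideal.span {g ^ (N + 1)})) :
    ∀ t : ℕ, hilbQ I t =
      ∑ j ∈ Finset.range (t + 1),
        hilbQ (Submodule.colon I (Ideal.span {g ^ j}) ⊔ Ideal.span {g}) (t - j) := by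
  clear hN
  exact stmt6' I hI g hg
end
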